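/- arXiv:2003.00942 — 4 statements merged into one kernel-verified Lean document; each statement's English description precedes it below -/
import Mathlib

section
/- Let k ≥ 1 be a natural number and let n, ñ be integers with 1 ≤ ñ ≤ k + k/3 and n ≥ 2k + 1. Then ñ(ñ−1)/2 + k·(n − ñ) ≤ (5k/3 − 1/2)·(n − k) + k²/3 − k/2. -/
/-- Degenerate-case estimate: for natural numbers `k ≥ 1`, `1 ≤ ñ ≤ k + k/3` and
`n ≥ 2k + 1` we have `ñ(ñ−1)/2 + k(n − ñ) ≤ (5k/3 − 1/2)(n − k) + k²/3 − k/2`. -/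
theorem degenerate_case_bound (k n nt : ℕ) (hk : 1 ≤ k) (hnt1 : 1 ≤ nt)
    (hnt2 : (nt : ℚ) ≤ (k : ℚ) + (k : ℚ) / 3) (hn : 2 * k + 1 ≤ n) :
    (nt : ℚ) * ((nt : ℚ) - 1) / 2 + (k : ℚ) * ((n : ℚ) - (nt : ℚ)) ≤
      (5 * (k : ℚ) / 3 - 1 / 2) * ((n : ℚ) - (k : ℚ)) + (k : ℚ) ^ 2 / 3 - (k : ℚ) / 2 := by
  have hk' : (1 : ℚ) ≤ (k : ℚ) := by exact_mod_cast hk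
  have hnt1' : (1 : ℚ) ≤ (nt : ℚ) := by exact_mod_cast hnt1
  have hn' : 2 * (k : ℚ) + 1 ≤ (n : ℚ) := by exact_mod_cast hn
  nlinarith [mul_nonneg (sub_nonneg.2 hnt1') (sub_nonneg.2 hnt2),
    mul_nonneg (sub_nonneg.2 hn') (sub_nonneg.2 hk'),
    mul_nonneg (sub_nonneg.2 hn') (sub_nonneg.2 hnt2),
    sq_nonneg ((nt : ℚ) - k), sq_nonneg ((k : ℚ) - 1)]
end

section
/- Let ℓ_M ≥ 1 be a power of 2 and let m_Y, ℓ_Y be positive reals indexed by a finite set of classes Y, partitioned into sets X₀, …, X_{log₂(ℓ_M)−1} where each Y ∈ X_i has ℓ_Y < ℓ_M/2^i, and |X_i| ≤ 2^i. If n = Σ_Y m_Y, then Σ_Y m_Y²/ℓ_Y ≥ n²/(ℓ_M · log₂(ℓ_M)). -/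
open Finset

/-- Cauchy–Schwarz double estimate: if the classes `Y` of a finite set `s` are
partitioned into bands `X₀, …, X_{y−1}` (via `c : ι → ℕ`, with `ℓ_M = 2^y`), each
`Y` in band `i` has `0 < ℓ Y < ℓ_M / 2^i`, each band has at most `2^i` classes, and
`n = Σ_Y m Y` with all `m Y > 0`, then `Σ_Y (m Y)²/ℓ Y ≥ n²/(ℓ_M · log₂ ℓ_M)`. -/
theorem cauchy_schwarz_reach_bound {ι : Type*} [DecidableEq ι] (s : Finset ι)
    (y : ℕ) (lM : ℝ) (hlM : lM = 2 ^ y)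
    (m l : ι → ℝ) (c : ι → ℕ)
    (hc : ∀ Y ∈ s, c Y < y)
    (hm : ∀ Y ∈ s, 0 < m Y)
    (hlpos : ∀ Y ∈ s, 0 < l Y)
    (hl : ∀ Y ∈ s, l Y < lM / 2 ^ (c Y))
    (hcard : ∀ i : ℕ, (s.filter (fun Y => c Y = i)).card ≤ 2 ^ i)
    (n : ℝ) (hn : n = ∑ Y ∈ s, m Y) :
    n ^ 2 / (lM * y) ≤ ∑ Y ∈ s, (m Y) ^ 2 / l Y := by
  rcases s.eq_empty_or_nonempty with rfl | hs
  · simp [hn]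
  have hrhs : ∀ Y ∈ s, 0 ≤ m Y ^ 2 / l Y := fun Y hY =>
    div_nonneg (sq_nonneg _) (hlpos Y hY).le
  -- sum of l bounded by lM * y
  have hsum : ∑ Y ∈ s, l Y ≤ lM * y := by
    rw [← Finset.sum_fiberwise_of_maps_to (g := c) (t := Finset.range y) (fun Y hY => Finset.mem_range.2 (hc Y hY)) l]
    calc ∑ i ∈ Finset.range y, ∑ Y ∈ s.filter (fun Y => c Y = i), l Y
        ≤ ∑ i ∈ Finset.range y, lM := by
          refine Finset.sum_le_sum fun i _ => ?_
          calc ∑ Y ∈ s.filter (fun Y => c Y = i), l Y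
              ≤ ∑ Y ∈ s.filter (fun Y => c Y = i), lM / 2 ^ i := by
                refine Finset.sum_le_sum fun Y hY => ?_
                have hYs := (Finset.mem_filter.1 hY).1
                have hYc := (Finset.mem_filter.1 hY).2
                have := (hl Y hYs).le
                rwa [hYc] at this
            _ = (s.filter (fun Y => c Y = i)).card * (lM / 2 ^ i) := by
                rw [Finset.sum_const, nsmul_eq_mul]
            _ ≤ (2 ^ i : ℝ) * (lM / 2 ^ i) := by
                have hpos : (0:ℝ) < lM / 2 ^ i := by rw [hlM]; positivity
                refine mul_le_mul_of_nonneg_right ?_ hpos.le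
                exact_mod_cast hcard i
            _ = lM := by field_simp
      _ = lM * y := by simp [mul_comm]
  have hlsum : 0 < ∑ Y ∈ s, l Y := Finset.sum_pos hlpos hs
  calc n ^ 2 / (lM * y) ≤ n ^ 2 / ∑ Y ∈ s, l Y :=
        div_le_div_of_nonneg_left (sq_nonneg _) hlsum hsum
    _ ≤ ∑ Y ∈ s, m Y ^ 2 / l Y := by
        rw [hn]; exact Finset.sq_sum_div_le_sum_sq_div s m hlpos
end

section
/- Let k be a power of 2 and define e₀ = (5/3)k² − k + 1/3, s_i = k²/2^{i+2} − k/2, and e_{i+1} = 2e_i − s_i. Then with n_i = k + k·2^i, for all i ≥ 0: e_i = ((3k−1)/2)·(n_i − k) + (n_i − k)/(3k) + (k²/3)·(k/(2(n_i − k))) − k/2. -/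
/-- Edge counts of the Mader-type extremal graphs `Hᵢ`: with `k = 2^K` (`k ≥ 2`),
`e₀ = (5/3)k² − k + 1/3`, `sᵢ = k²/2^{i+2} − k/2` and `e_{i+1} = 2eᵢ − sᵢ`,
setting `nᵢ = k + k·2^i` we have, for all `i` with `2^i ≤ k`,
`eᵢ = ((3k−1)/2)(nᵢ−k) + (nᵢ−k)/(3k) + (k²/3)·(k/(2(nᵢ−k))) − k/2`. -/
theorem Hi_edge_count (K : ℕ) (hK : 1 ≤ K) (k : ℚ) (hk : k = 2 ^ K) (e : ℕ → ℚ)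
    (he0 : e 0 = 5 / 3 * k ^ 2 - k + 1 / 3)
    (herec : ∀ i : ℕ, e (i + 1) = 2 * e i - (k ^ 2 / 2 ^ (i + 2) - k / 2))
    (i : ℕ) (hi : (2 : ℚ) ^ i ≤ k) :
    e i = ((3 * k - 1) / 2) * ((k + k * 2 ^ i) - k) + ((k + k * 2 ^ i) - k) / (3 * k) +
      (k ^ 2 / 3) * (k / (2 * ((k + k * 2 ^ i) - k))) - k / 2 := by
  have hk0 : k ≠ 0 := by rw [hk]; positivity
  clear hi
  induction i with
  | zero =>
    rw [he0]; field_simp; ring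
  | succ n ih =>
    have h2 : (2 : ℚ) ^ n ≠ 0 := by positivity
    rw [herec n, ih]
    field_simp
    ring
end

section
/- Any graph G that has no (k+1)-connected subgraph with more than 2k vertices admits a recursive decomposition (separator-tree) in which every leaf part has at most 2k vertices, every internal split is along a separation of order at most k with both strict sides nonempty, and the pieces are induced subgraphs. -/
open Finset

/-!
Induct on the vertex set `A`. If `|A| > 2k`, the hypothesis yields a set `S ⊆ A` of at most
`k` vertices whose removal disconnects `G[A]`. Splitting `A \ S` into one component `X` and
the rest gives the separation `(S ∪ X, A \ X)` of order `|S| ≤ k`, whose sides are proper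
subsets of `A` and so carry separator-trees by induction.
-/

/-- `HasSepTree G k A` says the induced subgraph of `G` on the vertex set `A` admits
a separator-tree of adhesion `k`: either `A` has at most `2k` vertices (a leaf), or
`A` splits along a separation of order at most `k`, with both strict sides nonempty,
whose two sides recursively admit separator-trees. -/
inductive HasSepTree {V : Type*} [DecidableEq V] (G : SimpleGraph V) (k : ℕ) :
    Finset V → Prop
  | leaf (A : Finset V) (h : A.card ≤ 2 * k) : HasSepTree G k A
  | node (A B C : Finset V) (hunion : B ∪ C = A) (horder : (B ∩ C).card ≤ k)
      (hBne : (B \ C).Nonempty) (hCne : (C \ B).Nonempty)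
      (hsep : ∀ b ∈ B \ C, ∀ c ∈ C \ B, ¬ G.Adj b c)
      (hB : HasSepTree G k B) (hC : HasSepTree G k C) : HasSepTree G k A

namespace SimpleGraph

variable {V : Type*} [DecidableEq V] {G : SimpleGraph V}

theorem exists_subset_not_adj_of_not_preconnected_induce {U : Finset V}
    (h : ¬ (G.induce (U : Set V)).Preconnected) :
    ∃ X ⊆ U, X.Nonempty ∧ (U \ X).Nonempty ∧ ∀ x ∈ X, ∀ y ∈ U \ X, ¬ G.Adj x y := by
  classical
  obtain ⟨x, y, hxy⟩ : ∃ x y, ¬ (G.induce (U : Set V)).Reachable x y := by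
    simpa [Preconnected] using h
  let X := U.filter fun z => ∃ hz : z ∈ U, (G.induce (U : Set V)).Reachable x ⟨z, hz⟩
  refine ⟨X, filter_subset _ _, ⟨x, mem_filter.2 ⟨x.2, x.2, Reachable.refl _⟩⟩,
    ⟨y, mem_sdiff.2 ⟨y.2, fun hy => hxy (mem_filter.1 hy).2.2⟩⟩, ?_⟩
  intro a ha b hb hab
  obtain ⟨-, haU, hxa⟩ := mem_filter.1 ha
  obtain ⟨hbU, hbX⟩ := mem_sdiff.1 hb
  have hab' : (G.induce (U : Set V)).Adj ⟨a, haU⟩ ⟨b, hbU⟩ := hab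
  exact hbX (mem_filter.2 ⟨hbU, hbU, hxa.trans hab'.reachable⟩)

end SimpleGraph

section

variable {V : Type*} [DecidableEq V] {G : SimpleGraph V} {k : ℕ} {A : Finset V}

theorem HasSepTree.of_separation {B C : Finset V} (hunion : B ∪ C = A)
    (horder : (B ∩ C).card ≤ k) (hBne : (B \ C).Nonempty) (hCne : (C \ B).Nonempty)
    (hsep : ∀ b ∈ B \ C, ∀ c ∈ C \ B, ¬ G.Adj b c) (ih : ∀ D ⊂ A, HasSepTree G k D) :
    HasSepTree G k A := by
  have proper : ∀ {D E : Finset V}, D ∪ E = A → (E \ D).Nonempty → D ⊂ A := by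
    rintro D E rfl ⟨e, he⟩
    exact (ssubset_iff_of_subset subset_union_left).2
      ⟨e, mem_union_right _ (mem_sdiff.1 he).1, (mem_sdiff.1 he).2⟩
  exact HasSepTree.node A B C hunion horder hBne hCne hsep
    (ih B (proper hunion hCne)) (ih C (proper (union_comm B C ▸ hunion) hBne))

theorem HasSepTree.of_split {S X : Finset V} (hSA : S ⊆ A) (hS : S.card ≤ k)
    (hXA : X ⊆ A \ S) (hX : X.Nonempty) (hY : ((A \ S) \ X).Nonempty)
    (hsep : ∀ x ∈ X, ∀ y ∈ (A \ S) \ X, ¬ G.Adj x y)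
    (ih : ∀ B ⊂ A, HasSepTree G k B) : HasSepTree G k A := by
  have hmem : ∀ a, (a ∈ S → a ∈ A) ∧ (a ∈ X → a ∈ A ∧ a ∉ S) := fun a =>
    ⟨@hSA a, fun ha => mem_sdiff.1 (hXA ha)⟩
  have hunion : (S ∪ X) ∪ (A \ X) = A := by
    ext a; have := hmem a; simp only [mem_union, mem_sdiff]; tauto
  have hinter : (S ∪ X) ∩ (A \ X) = S := by
    ext a; have := hmem a; simp only [mem_union, mem_inter, mem_sdiff]; tauto
  have hleft : (S ∪ X) \ (A \ X) = X := by
    ext a; have := hmem a; simp only [mem_union, mem_sdiff]; tauto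
  have hright : (A \ X) \ (S ∪ X) = (A \ S) \ X := by
    ext a; simp only [mem_union, mem_sdiff]; tauto
  refine HasSepTree.of_separation hunion ?_ ?_ ?_ ?_ ih
  · rwa [hinter]
  · rwa [hleft]
  · rwa [hright]
  · rwa [hleft, hright]

end

/-- Any finite graph with no `(k+1)`-connected (induced) subgraph on more than `2k`
vertices admits a separator-tree of adhesion `k` on its whole vertex set. -/
theorem separator_tree_exists {V : Type*} [Fintype V] [DecidableEq V]
    (G : SimpleGraph V) (k : ℕ) (hk : 1 ≤ k)
    (h : ∀ A : Finset V, 2 * k < A.card →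
      ¬ (k + 1 < A.card ∧ ∀ S : Finset V, S ⊆ A → S.card ≤ k →
        (G.induce ((A \ S : Finset V) : Set V)).Connected)) :
    HasSepTree G k Finset.univ := by
  suffices ∀ A : Finset V, HasSepTree G k A from this Finset.univ
  intro A
  induction A using Finset.strongInduction with
  | _ A ih =>
  by_cases hA : A.card ≤ 2 * k
  · exact HasSepTree.leaf A hA
  push Not at hA
  obtain ⟨S, hSA, hSk, hdisc⟩ : ∃ S ⊆ A, S.card ≤ k ∧
      ¬ (G.induce ((A \ S : Finset V) : Set V)).Connected := by
    simpa using not_and.1 (h A hA) (by omega)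
  have hne : Nonempty ((A \ S : Finset V) : Set V) := by
    obtain ⟨v, hv⟩ : (A \ S).Nonempty := by
      rw [← card_pos, card_sdiff_of_subset hSA]; omega
    exact ⟨⟨v, hv⟩⟩
  obtain ⟨X, hXA, hX, hY, hsep⟩ :=
    SimpleGraph.exists_subset_not_adj_of_not_preconnected_induce
      fun hpre => hdisc (SimpleGraph.connected_iff _ |>.2 ⟨hpre, hne⟩)
  exact HasSepTree.of_split hSA hSk hXA hX hY hsep ih
end
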